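/- Bound on the remainder terms (estimate (4.42)): Given resolvent data and a real-valued C¹ function q on [0,L] with q(0) = 0, define R₁ = Re ∫₀ᴸ 2μ·q·( f₄·conj(P′) + conj(f₃′)·Θ ) dx, R₂ = Re ∫₀ᴸ 2ρ·q·( f₂·conj(V′) + Φ·conj(f₁′) ) dx, N² = ∫₀ᴸ( ρ|Φ|² + μ|Θ|² + α₁|V′|² + β|γV′ − P′|² ) dx, and ‖F‖² = ∫₀ᴸ( ρ|f₂|² + μ|f₄|² + α₁|f₁′|² + β|γf₁′ − f₃′|² ) dx + m₁|f₅|² + m₂|f₆|². Then there exists a constant C > 0, depending only on ρ, μ, α₁, β, γ and sup_{[0,L]}|q| (and not on the resolvent data or λ), such that |R₁| ≤ C·N·‖F‖ and |R₂| ≤ C·N·‖F‖. -/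

import Mathlib

/-!
Each factor of the integrands is bounded pointwise by a fixed multiple `κ` of the square root
of the corresponding energy density `e`: for instance `‖Φ‖ ≤ √e / √ρ`, and
`‖P′‖ ≤ (|γ| / √α₁ + 1 / √β) √e` because `P′ = γV′ − (γV′ − P′)`. So the integrand of `Rᵢ` is at
most `4 w sup|q| κ² √e_U √e_F`, and the Cauchy–Schwarz inequality in `L²(0, L)` bounds its
integral by `N (∫ e_F)^{1/2} ≤ N ‖F‖`, the tip-body terms of `‖F‖²` being nonnegative.
-/

open Complex

/-- Resolvent data for the damped piezoelectric beam system with magnetic effect and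
tip body: solutions of the resolvent (spectral) equation `iλU − AU = F` written in
components, together with the boundary conditions. -/
structure ResolventData (ρ μ β m₁ m₂ ξ₁ ξ₂ γ α₁ α L lam : ℝ) where
  V : ℝ → ℂ
  P : ℝ → ℂ
  Φ : ℝ → ℂ
  Θ : ℝ → ℂ
  f₁ : ℝ → ℂ
  f₂ : ℝ → ℂ
  f₃ : ℝ → ℂ
  f₄ : ℝ → ℂ
  u : ℂ
  η : ℂ
  f₅ : ℂ
  f₆ : ℂ
  hV : ContDiff ℝ 2 V
  hP : ContDiff ℝ 2 P
  hΦ : ContDiff ℝ 1 Φ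
  hΘ : ContDiff ℝ 1 Θ
  hf₁ : ContDiff ℝ 1 f₁
  hf₃ : ContDiff ℝ 1 f₃
  hf₂ : Continuous f₂
  hf₄ : Continuous f₄
  eq1 : ∀ x ∈ Set.Icc (0:ℝ) L, Complex.I * (lam : ℂ) * V x - Φ x = f₁ x
  eq2 : ∀ x ∈ Set.Icc (0:ℝ) L,
    Complex.I * (lam : ℂ) * (ρ : ℂ) * Φ x - (α : ℂ) * deriv (deriv V) x
      + (γ : ℂ) * (β : ℂ) * deriv (deriv P) x = (ρ : ℂ) * f₂ x
  eq3 : ∀ x ∈ Set.Icc (0:ℝ) L, Complex.I * (lam : ℂ) * P x - Θ x = f₃ x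
  eq4 : ∀ x ∈ Set.Icc (0:ℝ) L,
    Complex.I * (lam : ℂ) * (μ : ℂ) * Θ x - (β : ℂ) * deriv (deriv P) x
      + (γ : ℂ) * (β : ℂ) * deriv (deriv V) x = (μ : ℂ) * f₄ x
  bV0 : V 0 = 0
  bP0 : P 0 = 0
  bΦ0 : Φ 0 = 0
  bΘ0 : Θ 0 = 0
  bΦL : Φ L = u
  bΘL : Θ L = η
  bu : (Complex.I * (lam : ℂ) * (m₁ : ℂ) + (ξ₁ : ℂ)) * u + (α : ℂ) * deriv V L
      - (γ : ℂ) * (β : ℂ) * deriv P L = (m₁ : ℂ) * f₅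
  bη : (Complex.I * (lam : ℂ) * (m₂ : ℂ) + (ξ₂ : ℂ)) * η + (β : ℂ) * deriv P L
      - (γ : ℂ) * (β : ℂ) * deriv V L = (m₂ : ℂ) * f₆

variable {ρ μ β m₁ m₂ ξ₁ ξ₂ γ α₁ α L lam : ℝ}

/-- The squared interior norm `N²` of the resolvent data. -/
noncomputable def Nsq (D : ResolventData ρ μ β m₁ m₂ ξ₁ ξ₂ γ α₁ α L lam) : ℝ :=
  ∫ x in (0:ℝ)..L,
    (ρ * ‖D.Φ x‖ ^ 2 + μ * ‖D.Θ x‖ ^ 2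
      + α₁ * ‖deriv D.V x‖ ^ 2
      + β * ‖(γ : ℂ) * deriv D.V x - deriv D.P x‖ ^ 2)

/-- The squared state-space norm `‖U‖²` of the resolvent data. -/
noncomputable def Usq (D : ResolventData ρ μ β m₁ m₂ ξ₁ ξ₂ γ α₁ α L lam) : ℝ :=
  Nsq D + m₁ * ‖D.u‖ ^ 2 + m₂ * ‖D.η‖ ^ 2

/-- The squared state-space norm `‖F‖²` of the right-hand side of the resolvent
equation. -/
noncomputable def Fsq (D : ResolventData ρ μ β m₁ m₂ ξ₁ ξ₂ γ α₁ α L lam) : ℝ :=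
  (∫ x in (0:ℝ)..L,
      (ρ * ‖D.f₂ x‖ ^ 2 + μ * ‖D.f₄ x‖ ^ 2
        + α₁ * ‖deriv D.f₁ x‖ ^ 2
        + β * ‖(γ : ℂ) * deriv D.f₁ x - deriv D.f₃ x‖ ^ 2))
    + m₁ * ‖D.f₅‖ ^ 2 + m₂ * ‖D.f₆‖ ^ 2

open MeasureTheory Set

theorem le_sqrt_div_sqrt_of_mul_sq_le {a c m : ℝ} (ha : 0 ≤ a) (hc : 0 < c) (h : c * a ^ 2 ≤ m) :
    a ≤ √m / √c := by
  rw [le_div_iff₀ (Real.sqrt_pos.2 hc), Real.le_sqrt (by positivity) (le_trans (by positivity) h),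
    mul_pow, Real.sq_sqrt hc.le]
  linarith

theorem integral_sqrt_mul_sqrt_le {X : Type*} [MeasurableSpace X] {ν : Measure X}
    {g n : X → ℝ} (hg0 : 0 ≤ᵐ[ν] g) (hn0 : 0 ≤ᵐ[ν] n) (hg : Integrable g ν)
    (hn : Integrable n ν) :
    ∫ x, √(g x) * √(n x) ∂ν ≤ √(∫ x, g x ∂ν) * √(∫ x, n x ∂ν) := by
  have memLp_sqrt {f : X → ℝ} (hf0 : 0 ≤ᵐ[ν] f) (hf : Integrable f ν) :
      MemLp (fun x => √(f x)) (ENNReal.ofReal 2) ν := by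
    rw [ENNReal.ofReal_ofNat, memLp_two_iff_integrable_sq
      (Real.continuous_sqrt.comp_aestronglyMeasurable hf.aestronglyMeasurable)]
    exact hf.congr (hf0.mono fun x hx => (Real.sq_sqrt hx).symm)
  have integral_sqrt_rpow_two {f : X → ℝ} (hf0 : 0 ≤ᵐ[ν] f) :
      (∫ x, √(f x) ^ (2 : ℝ) ∂ν) ^ (1 / (2 : ℝ)) = √(∫ x, f x ∂ν) := by
    rw [Real.sqrt_eq_rpow, integral_congr_ae (hf0.mono fun x hx => ?_)]
    simp only [Real.rpow_two, Real.sq_sqrt hx]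
  have holder := integral_mul_le_Lp_mul_Lq_of_nonneg Real.HolderConjugate.two_two
    (Filter.Eventually.of_forall fun x => Real.sqrt_nonneg (g x))
    (Filter.Eventually.of_forall fun x => Real.sqrt_nonneg (n x))
    (memLp_sqrt hg0 hg) (memLp_sqrt hn0 hn)
  rwa [integral_sqrt_rpow_two hg0, integral_sqrt_rpow_two hn0] at holder

theorem intervalIntegral_sqrt_mul_sqrt_le {L : ℝ} (hL : 0 ≤ L) {g n : ℝ → ℝ}
    (hg0 : ∀ x, 0 ≤ g x) (hn0 : ∀ x, 0 ≤ n x) (hg : IntervalIntegrable g volume 0 L)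
    (hn : IntervalIntegrable n volume 0 L) :
    ∫ x in (0:ℝ)..L, √(g x) * √(n x) ≤ √(∫ x in (0:ℝ)..L, g x) * √(∫ x in (0:ℝ)..L, n x) := by
  simp only [intervalIntegral.integral_of_le hL]
  exact integral_sqrt_mul_sqrt_le (ae_of_all _ hg0) (ae_of_all _ hn0) hg.1 hn.1

theorem norm_intervalIntegral_le_mul_sqrt_mul_sqrt {L K : ℝ} (hL : 0 ≤ L) (hK : 0 ≤ K)
    {E : ℝ → ℂ} {g n : ℝ → ℝ} (hg0 : ∀ x, 0 ≤ g x) (hn0 : ∀ x, 0 ≤ n x)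
    (hg : Continuous g) (hn : Continuous n)
    (hE : ∀ x ∈ Icc 0 L, ‖E x‖ ≤ K * (√(g x) * √(n x))) :
    ‖∫ x in (0:ℝ)..L, E x‖ ≤ K * √(∫ x in (0:ℝ)..L, g x) * √(∫ x in (0:ℝ)..L, n x) := by
  have hbound : Continuous fun x => K * (√(g x) * √(n x)) := by fun_prop
  calc ‖∫ x in (0:ℝ)..L, E x‖
      ≤ ∫ x in (0:ℝ)..L, K * (√(g x) * √(n x)) :=
        intervalIntegral.norm_integral_le_of_norm_le hL
          (ae_of_all _ fun x hx => hE x (Ioc_subset_Icc_self hx)) (hbound.intervalIntegrable 0 L)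
    _ = K * ∫ x in (0:ℝ)..L, √(g x) * √(n x) := intervalIntegral.integral_const_mul _ _
    _ ≤ K * (√(∫ x in (0:ℝ)..L, g x) * √(∫ x in (0:ℝ)..L, n x)) := by
        gcongr
        exact intervalIntegral_sqrt_mul_sqrt_le hL hg0 hn0
          (hg.intervalIntegrable 0 L) (hn.intervalIntegrable 0 L)
    _ = _ := (mul_assoc _ _ _).symm

noncomputable def energyDensity (ρ μ α₁ β γ : ℝ) (φ θ v p : ℂ) : ℝ :=
  ρ * ‖φ‖ ^ 2 + μ * ‖θ‖ ^ 2 + α₁ * ‖v‖ ^ 2 + β * ‖(γ : ℂ) * v - p‖ ^ 2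

noncomputable def energyNormConst (ρ μ α₁ β γ : ℝ) : ℝ :=
  1 / √ρ + 1 / √μ + (1 + |γ|) / √α₁ + 1 / √β

theorem energyDensity_nonneg (hρ : 0 ≤ ρ) (hμ : 0 ≤ μ) (hα₁ : 0 ≤ α₁) (hβ : 0 ≤ β)
    (φ θ v p : ℂ) : 0 ≤ energyDensity ρ μ α₁ β γ φ θ v p := by
  unfold energyDensity
  positivity

theorem Continuous.energyDensity {φ θ v p : ℝ → ℂ} (hφ : Continuous φ) (hθ : Continuous θ)
    (hv : Continuous v) (hp : Continuous p) :
    Continuous fun x => energyDensity ρ μ α₁ β γ (φ x) (θ x) (v x) (p x) := by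
  unfold _root_.energyDensity
  fun_prop

theorem energyNormConst_pos (hρ : 0 < ρ) (hμ : 0 < μ) (hα₁ : 0 < α₁) (hβ : 0 < β) :
    0 < energyNormConst ρ μ α₁ β γ := by
  unfold energyNormConst
  positivity

theorem norm_le_energyNormConst_mul_sqrt (hρ : 0 < ρ) (hμ : 0 < μ) (hα₁ : 0 < α₁) (hβ : 0 < β)
    (φ θ v p : ℂ) :
    let e := energyDensity ρ μ α₁ β γ φ θ v p
    ‖φ‖ ≤ energyNormConst ρ μ α₁ β γ * √e ∧ ‖θ‖ ≤ energyNormConst ρ μ α₁ β γ * √e ∧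
      ‖v‖ ≤ energyNormConst ρ μ α₁ β γ * √e ∧ ‖p‖ ≤ energyNormConst ρ μ α₁ β γ * √e := by
  intro e
  have terms_le : ρ * ‖φ‖ ^ 2 ≤ e ∧ μ * ‖θ‖ ^ 2 ≤ e ∧ α₁ * ‖v‖ ^ 2 ≤ e ∧
      β * ‖(γ : ℂ) * v - p‖ ^ 2 ≤ e := by
    have := sq_nonneg ‖φ‖; have := sq_nonneg ‖θ‖; have := sq_nonneg ‖v‖
    have := sq_nonneg ‖(γ : ℂ) * v - p‖
    refine ⟨?_, ?_, ?_, ?_⟩ <;> (unfold e energyDensity; nlinarith)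
  obtain ⟨hφ, hθ, hv, hw⟩ := terms_le
  replace hφ := le_sqrt_div_sqrt_of_mul_sq_le (norm_nonneg _) hρ hφ
  replace hθ := le_sqrt_div_sqrt_of_mul_sq_le (norm_nonneg _) hμ hθ
  replace hv := le_sqrt_div_sqrt_of_mul_sq_le (norm_nonneg _) hα₁ hv
  replace hw := le_sqrt_div_sqrt_of_mul_sq_le (norm_nonneg _) hβ hw
  have hp : ‖p‖ ≤ |γ| * ‖v‖ + ‖(γ : ℂ) * v - p‖ := by
    simpa [norm_mul] using norm_sub_le ((γ : ℂ) * v) ((γ : ℂ) * v - p)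
  have hγv : |γ| * ‖v‖ ≤ |γ| * (√e / √α₁) := by gcongr
  have expand : energyNormConst ρ μ α₁ β γ * √e =
      √e / √ρ + √e / √μ + √e / √α₁ + |γ| * (√e / √α₁) + √e / √β := by
    unfold energyNormConst; ring
  have : 0 ≤ √e / √ρ := by positivity
  have : 0 ≤ √e / √μ := by positivity
  have : 0 ≤ √e / √α₁ := by positivity
  have : 0 ≤ |γ| * (√e / √α₁) := by positivity
  have : 0 ≤ √e / √β := by positivity
  refine ⟨?_, ?_, ?_, ?_⟩ <;> linarith

theorem abs_re_integral_remainder_le {L w Q κ : ℝ} (hL : 0 ≤ L) (hw : 0 ≤ w) {q : ℝ → ℝ}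
    (hqQ : ∀ x ∈ Icc 0 L, |q x| ≤ Q) {g n : ℝ → ℝ} (hg0 : ∀ x, 0 ≤ g x) (hn0 : ∀ x, 0 ≤ n x)
    (hg : Continuous g) (hn : Continuous n) {A B C D : ℝ → ℂ}
    (hA : ∀ x, ‖A x‖ ≤ κ * √(g x)) (hB : ∀ x, ‖B x‖ ≤ κ * √(n x))
    (hC : ∀ x, ‖C x‖ ≤ κ * √(g x)) (hD : ∀ x, ‖D x‖ ≤ κ * √(n x)) :
    |(∫ x in (0:ℝ)..L, 2 * (w : ℂ) * (q x : ℂ) *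
        (A x * starRingEnd ℂ (B x) + starRingEnd ℂ (C x) * D x)).re|
      ≤ 4 * w * Q * κ ^ 2 * √(∫ x in (0:ℝ)..L, n x) * √(∫ x in (0:ℝ)..L, g x) := by
  have hQ : 0 ≤ Q := (abs_nonneg _).trans (hqQ 0 ⟨le_rfl, hL⟩)
  refine (Complex.abs_re_le_norm _).trans <|
    norm_intervalIntegral_le_mul_sqrt_mul_sqrt hL (by positivity) hn0 hg0 hn hg fun x hx => ?_
  have hAB : ‖A x * starRingEnd ℂ (B x)‖ ≤ κ * √(g x) * (κ * √(n x)) := by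
    rw [norm_mul, RCLike.norm_conj]
    exact mul_le_mul (hA x) (hB x) (norm_nonneg _) ((norm_nonneg _).trans (hA x))
  have hCD : ‖starRingEnd ℂ (C x) * D x‖ ≤ κ * √(g x) * (κ * √(n x)) := by
    rw [norm_mul, RCLike.norm_conj]
    exact mul_le_mul (hC x) (hD x) (norm_nonneg _) ((norm_nonneg _).trans (hC x))
  calc _ = 2 * w * |q x| * ‖A x * starRingEnd ℂ (B x) + starRingEnd ℂ (C x) * D x‖ := by
        simp only [norm_mul, Complex.norm_ofNat, Complex.norm_real, Real.norm_eq_abs,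
          abs_of_nonneg hw]
    _ ≤ 2 * w * Q * (κ * √(g x) * (κ * √(n x)) + κ * √(g x) * (κ * √(n x))) := by
        gcongr
        exacts [hqQ x hx, (norm_add_le _ _).trans (add_le_add hAB hCD)]
    _ = 4 * w * Q * κ ^ 2 * (√(n x) * √(g x)) := by ring

section ResolventData

variable (D : ResolventData ρ μ β m₁ m₂ ξ₁ ξ₂ γ α₁ α L lam)

noncomputable def ResolventData.stateDensity (x : ℝ) : ℝ :=
  energyDensity ρ μ α₁ β γ (D.Φ x) (D.Θ x) (deriv D.V x) (deriv D.P x)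

noncomputable def ResolventData.forcingDensity (x : ℝ) : ℝ :=
  energyDensity ρ μ α₁ β γ (D.f₂ x) (D.f₄ x) (deriv D.f₁ x) (deriv D.f₃ x)

theorem ResolventData.continuous_stateDensity : Continuous D.stateDensity :=
  D.hΦ.continuous.energyDensity D.hΘ.continuous (D.hV.continuous_deriv (by norm_num))
    (D.hP.continuous_deriv (by norm_num))

theorem ResolventData.continuous_forcingDensity : Continuous D.forcingDensity :=
  D.hf₂.energyDensity D.hf₄ (D.hf₁.continuous_deriv le_rfl) (D.hf₃.continuous_deriv le_rfl)

theorem ResolventData.integral_forcingDensity_le_Fsq (hm₁ : 0 ≤ m₁) (hm₂ : 0 ≤ m₂) :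
    ∫ x in (0:ℝ)..L, D.forcingDensity x ≤ Fsq D := by
  have : 0 ≤ m₁ * ‖D.f₅‖ ^ 2 + m₂ * ‖D.f₆‖ ^ 2 := by positivity
  unfold Fsq ResolventData.forcingDensity energyDensity
  linarith

end ResolventData

theorem remainder_terms_bound_general
    (ρ μ β m₁ m₂ ξ₁ ξ₂ γ α₁ α L : ℝ)
    (hρ : 0 < ρ) (hμ : 0 < μ) (hβ : 0 < β) (hm₁ : 0 < m₁) (hm₂ : 0 < m₂)
    (hL : 0 < L) (hα₁ : 0 < α₁)
    (q : ℝ → ℝ) (hq : ContDiff ℝ 1 q) :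
    ∃ C > 0, ∀ (lam : ℝ) (D : ResolventData ρ μ β m₁ m₂ ξ₁ ξ₂ γ α₁ α L lam),
      |(∫ x in (0:ℝ)..L,
          (2 * (μ : ℂ) * (q x : ℂ) * (D.f₄ x * starRingEnd ℂ (deriv D.P x)
            + starRingEnd ℂ (deriv D.f₃ x) * D.Θ x))).re|
        ≤ C * Real.sqrt (Nsq D) * Real.sqrt (Fsq D) ∧
      |(∫ x in (0:ℝ)..L,
          (2 * (ρ : ℂ) * (q x : ℂ) * (D.f₂ x * starRingEnd ℂ (deriv D.V x)
            + D.Φ x * starRingEnd ℂ (deriv D.f₁ x)))).re|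
        ≤ C * Real.sqrt (Nsq D) * Real.sqrt (Fsq D) := by
  obtain ⟨Q₀, hQ₀⟩ :=
    isCompact_Icc.exists_bound_of_continuousOn (hq.continuous.continuousOn (s := Icc 0 L))
  have hqQ : ∀ x ∈ Icc 0 L, |q x| ≤ max Q₀ 1 := fun x hx => (hQ₀ x hx).trans (le_max_left _ _)
  set κ := energyNormConst ρ μ α₁ β γ
  have hκ : 0 < κ := energyNormConst_pos hρ hμ hα₁ hβ
  refine ⟨4 * (ρ + μ) * max Q₀ 1 * κ ^ 2, by positivity, fun lam D => ?_⟩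
  have hn0 x := energyDensity_nonneg hρ.le hμ.le hα₁.le hβ.le (γ := γ)
    (D.Φ x) (D.Θ x) (deriv D.V x) (deriv D.P x)
  have hg0 x := energyDensity_nonneg hρ.le hμ.le hα₁.le hβ.le (γ := γ)
    (D.f₂ x) (D.f₄ x) (deriv D.f₁ x) (deriv D.f₃ x)
  have hnb x := norm_le_energyNormConst_mul_sqrt hρ hμ hα₁ hβ (γ := γ)
    (D.Φ x) (D.Θ x) (deriv D.V x) (deriv D.P x)
  have hgb x := norm_le_energyNormConst_mul_sqrt hρ hμ hα₁ hβ (γ := γ)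
    (D.f₂ x) (D.f₄ x) (deriv D.f₁ x) (deriv D.f₃ x)
  have hF := Real.sqrt_le_sqrt (D.integral_forcingDensity_le_Fsq hm₁.le hm₂.le)
  constructor
  · calc _ ≤ 4 * μ * max Q₀ 1 * κ ^ 2 * √(Nsq D) * √(∫ x in (0:ℝ)..L, D.forcingDensity x) :=
          abs_re_integral_remainder_le hL.le hμ.le hqQ hg0 hn0 D.continuous_forcingDensity
            D.continuous_stateDensity (fun x => (hgb x).2.1) (fun x => (hnb x).2.2.2)
            (fun x => (hgb x).2.2.2) (fun x => (hnb x).2.1)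
      _ ≤ _ := by gcongr; linarith
  · simp only [mul_comm (D.Φ _)]
    calc _ ≤ 4 * ρ * max Q₀ 1 * κ ^ 2 * √(Nsq D) * √(∫ x in (0:ℝ)..L, D.forcingDensity x) :=
          abs_re_integral_remainder_le hL.le hρ.le hqQ hg0 hn0 D.continuous_forcingDensity
            D.continuous_stateDensity (fun x => (hgb x).1) (fun x => (hnb x).2.2.1)
            (fun x => (hgb x).2.2.1) (fun x => (hnb x).1)
      _ ≤ _ := by gcongr; linarith

/-- Bound on the remainder terms (estimate (4.42)): `|R₁| ≤ C N ‖F‖` and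
`|R₂| ≤ C N ‖F‖`, where `C` depends only on `ρ, μ, α₁, β, γ` and `sup |q|`, not on
the resolvent data or on `λ`. -/
theorem remainder_terms_bound
    (ρ μ β m₁ m₂ ξ₁ ξ₂ γ α₁ α L : ℝ)
    (hρ : 0 < ρ) (hμ : 0 < μ) (hβ : 0 < β) (hm₁ : 0 < m₁) (hm₂ : 0 < m₂)
    (hξ₁ : 0 < ξ₁) (hξ₂ : 0 < ξ₂) (hL : 0 < L) (hα₁ : 0 < α₁)
    (hα : α = α₁ + γ ^ 2 * β)
    (q : ℝ → ℝ) (hq : ContDiff ℝ 1 q) (hq0 : q 0 = 0) :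
    ∃ C > 0, ∀ (lam : ℝ) (D : ResolventData ρ μ β m₁ m₂ ξ₁ ξ₂ γ α₁ α L lam),
      |(∫ x in (0:ℝ)..L,
          (2 * (μ : ℂ) * (q x : ℂ) * (D.f₄ x * starRingEnd ℂ (deriv D.P x)
            + starRingEnd ℂ (deriv D.f₃ x) * D.Θ x))).re|
        ≤ C * Real.sqrt (Nsq D) * Real.sqrt (Fsq D) ∧
      |(∫ x in (0:ℝ)..L,
          (2 * (ρ : ℂ) * (q x : ℂ) * (D.f₂ x * starRingEnd ℂ (deriv D.V x)
            + D.Φ x * starRingEnd ℂ (deriv D.f₁ x)))).re|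
        ≤ C * Real.sqrt (Nsq D) * Real.sqrt (Fsq D) :=
  remainder_terms_bound_general ρ μ β m₁ m₂ ξ₁ ξ₂ γ α₁ α L hρ hμ hβ hm₁ hm₂ hL hα₁ q hq
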